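/- arXiv:2410.14163 — 3 statements merged into one kernel-verified Lean document; each statement's English description precedes it below -/
import Mathlib

section
/- Let q1, q2, a1, a2, b1, b2, c1, c2 be real numbers and let S = {(x, y) ∈ [0,1]² : q1·x·y + a1·x + b1·y + c1 = 0 and q2·x·y + a2·x + b2·y + c2 = 0}. Assume S is nonempty and the two constraints are independent, i.e., there is no real number μ with (q1, a1, b1, c1) = μ·(q2, a2, b2, c2). Then there exists a set T ⊆ ℝ² with at most 3 elements such that conv(S) = ⋂_{λ ∈ T} conv(S_λ). -/
/-!
Replacing the second constraint by `q₁ f₂ - q₂ f₁` (or exchanging the two constraints) changes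
neither `S` nor the family of aggregations, so the pencil may be assumed to be spanned by a
bilinear `f` with `q ≠ 0` and an affine `g`. The aggregation `g` alone confines the intersection
of the convex hulls to the segment `L = {g = 0}` of the box. An aggregation `f + s g` whose denominator
`q x + b + s β` has no zero on `[0,1]` vanishes only on the graph of a Möbius function of `x`,
convex or concave according to the sign of its discriminant `D(s)`; the region on the matching
side of the graph is convex, and on `L` it reads `D(s) f ≥ 0`.

If `L` is horizontal, `D(s)` is affine in `s`, and two aggregations with `|s|` large and of
opposite signs force `f = 0` on `L`. Otherwise `β f` restricted to `L` is
`-q α (x - x₁) (x - x₂)`, where `(x₁, y₁) ∈ S` and `(x₂, y₂)` is the second common zero. If the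
latter lies in the box, one aggregation with `D(s) q α β > 0` confines `L` to the segment between
the two. If not, say `y₂ ∉ [0,1]`, the degenerate aggregation `q (x - x₁) (y - y₂)` vanishes in the
box only on the line `x = x₁`, which meets `L` only in `(x₁, y₁)`. A vertical `L`, or
`x₂ ∉ [0,1]`, is reduced to these cases by exchanging the coordinates.
-/

open Set

/-- The box `[0,1]²`. -/
def unitSquare : Set (ℝ × ℝ) := {p | p.1 ∈ Icc (0:ℝ) 1 ∧ p.2 ∈ Icc (0:ℝ) 1}

/-- The set described by two bilinear bipartite equalities in the box. -/
def setS (q1 q2 a1 a2 b1 b2 c1 c2 : ℝ) : Set (ℝ × ℝ) :=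
  {p ∈ unitSquare | q1 * p.1 * p.2 + a1 * p.1 + b1 * p.2 + c1 = 0 ∧
    q2 * p.1 * p.2 + a2 * p.1 + b2 * p.2 + c2 = 0}

/-- The aggregated set with weights `l = (λ₁, λ₂)`. -/
def setAgg (q1 q2 a1 a2 b1 b2 c1 c2 : ℝ) (l : ℝ × ℝ) : Set (ℝ × ℝ) :=
  {p ∈ unitSquare |
    l.1 * (q1 * p.1 * p.2 + a1 * p.1 + b1 * p.2 + c1) +
      l.2 * (q2 * p.1 * p.2 + a2 * p.1 + b2 * p.2 + c2) = 0}

def bilin (q a b c : ℝ) (p : ℝ × ℝ) : ℝ := q * p.1 * p.2 + a * p.1 + b * p.2 + c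

def commonZeros (f g : ℝ × ℝ → ℝ) : Set (ℝ × ℝ) := {p ∈ unitSquare | f p = 0 ∧ g p = 0}

lemma bilin_swap (q a b c : ℝ) (p : ℝ × ℝ) : bilin q a b c p.swap = bilin q b a c p := by
  simp only [bilin, Prod.fst_swap, Prod.snd_swap]; ring

lemma bilin_comp_swap (q a b c : ℝ) : bilin q a b c ∘ Prod.swap = bilin q b a c :=
  funext (bilin_swap q a b c)

lemma image_swap_sep (P : ℝ × ℝ → Prop) :
    Prod.swap '' {p ∈ unitSquare | P p.swap} = {p ∈ unitSquare | P p} := by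
  rw [image_swap_eq_preimage_swap]
  ext p
  simp only [mem_preimage, mem_ofPred_eq, unitSquare, Prod.fst_swap, Prod.snd_swap,
    Prod.swap_swap, and_comm (a := p.2 ∈ _)]

lemma swap_mem_commonZeros_bilin {q a b c q' a' b' c' : ℝ} {p : ℝ × ℝ}
    (h : p ∈ commonZeros (bilin q a b c) (bilin q' a' b' c')) :
    p.swap ∈ commonZeros (bilin q b a c) (bilin q' b' a' c') :=
  ⟨⟨h.1.2, h.1.1⟩, by rw [bilin_swap]; exact h.2.1, by rw [bilin_swap]; exact h.2.2⟩

lemma convex_setOf_bilin_zero_eq_zero (a b c : ℝ) :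
    Convex ℝ {p ∈ unitSquare | bilin 0 a b c p = 0} := by
  refine Convex.inter ((convex_Icc 0 1).prod (convex_Icc 0 1)) ?_
  intro p (hp : bilin 0 a b c p = 0) r (hr : bilin 0 a b c r = 0) s t hs ht hst
  change bilin 0 a b c (s • p + t • r) = 0
  simp only [bilin, Prod.fst_add, Prod.snd_add, Prod.smul_fst, Prod.smul_snd,
    smul_eq_mul] at hp hr ⊢
  linear_combination s * hp + t * hr - c * hst

lemma exists_forall_le_abs_quadratic_pos {a : ℝ} (ha : 0 < a) (b c : ℝ) :
    ∃ M, ∀ s, M ≤ |s| → 0 < a * s ^ 2 + b * s + c := by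
  refine ⟨(|b| + |c|) / a + 1, fun s hs => ?_⟩
  have hM : |b| + |c| + a ≤ a * |s| := by
    have := mul_le_mul_of_nonneg_left hs ha.le
    rwa [mul_add, mul_div_cancel₀ _ ha.ne', mul_one] at this
  have hs1 : 1 ≤ |s| := by nlinarith [abs_nonneg b, abs_nonneg c]
  have hsq : (|b| + |c| + a) * |s| ≤ a * s ^ 2 := by
    rw [← sq_abs, sq]; nlinarith [abs_nonneg s]
  nlinarith [neg_abs_le (b * s), abs_mul b s, neg_abs_le c, abs_nonneg c]

lemma eq_zero_of_mul_nonneg_of_mul_nonneg {d₁ d₂ x : ℝ} (h₁ : 0 ≤ d₁ * x) (h₂ : 0 ≤ d₂ * x)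
    (h : d₁ * d₂ < 0) : x = 0 := by
  have hx : x ^ 2 ≤ 0 := nonpos_of_mul_nonneg_right (by nlinarith [mul_nonneg h₁ h₂]) h
  exact pow_eq_zero_iff two_ne_zero |>.1 (le_antisymm hx (sq_nonneg x))

lemma convex_setOf_mul_bilin_nonneg_of_pos {Q A B C : ℝ}
    (hw : ∀ t ∈ Icc (0:ℝ) 1, 0 < Q * t + B) :
    Convex ℝ {p : ℝ × ℝ | p.1 ∈ Icc 0 1 ∧ 0 ≤ Q * (A * B - Q * C) * bilin Q A B C p} := by
  rintro p ⟨hp, hfp⟩ r ⟨hr, hfr⟩ s t hs ht hst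
  obtain rfl : t = 1 - s := by linarith
  have hz := convex_Icc (0:ℝ) 1 hp hr hs ht hst
  simp only [smul_eq_mul] at hz
  simp only [mem_ofPred_eq, Prod.fst_add, Prod.smul_fst, smul_eq_mul]
  refine ⟨hz, ?_⟩
  set D := Q * (A * B - Q * C)
  -- Jensen's inequality for the Möbius function `x ↦ -(A x + C) / (Q x + B)`, whose convexity
  -- has the sign of `D`, with the denominators cleared
  have key : D * bilin Q A B C (s • p + (1 - s) • r) * ((Q * p.1 + B) * (Q * r.1 + B)) =
      s * ((Q * r.1 + B) * (Q * (s * p.1 + (1 - s) * r.1) + B)) * (D * bilin Q A B C p) +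
      (1 - s) * ((Q * p.1 + B) * (Q * (s * p.1 + (1 - s) * r.1) + B)) * (D * bilin Q A B C r) +
      s * (1 - s) * (p.1 - r.1) ^ 2 * D ^ 2 := by
    simp only [bilin, D, Prod.fst_add, Prod.snd_add, Prod.smul_fst, Prod.smul_snd, smul_eq_mul]
    ring
  refine nonneg_of_mul_nonneg_left ?_ (mul_pos (hw _ hp) (hw _ hr))
  rw [key]
  have hwz := hw _ hz
  have hwp := hw _ hp
  have hwr := hw _ hr
  have h1s : 0 ≤ 1 - s := by linarith
  exact add_nonneg (add_nonneg (mul_nonneg (mul_nonneg hs (by positivity)) hfp)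
    (mul_nonneg (mul_nonneg h1s (by positivity)) hfr)) (by positivity)

lemma convex_setOf_mul_bilin_nonneg {Q A B C : ℝ} (h : 0 < B * (Q + B)) :
    Convex ℝ {p : ℝ × ℝ | p.1 ∈ Icc 0 1 ∧ 0 ≤ Q * (A * B - Q * C) * bilin Q A B C p} := by
  rcases lt_or_gt_of_ne (left_ne_zero_of_mul h.ne') with hB | hB
  · have hQB : Q + B < 0 := neg_of_mul_pos_right h hB.le
    have hw : ∀ t ∈ Icc (0:ℝ) 1, 0 < -Q * t + -B := fun t ht => by
      nlinarith [mul_nonneg ht.1 (neg_nonneg.2 hQB.le),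
        mul_nonneg (sub_nonneg.2 ht.2) (neg_nonneg.2 hB.le)]
    convert convex_setOf_mul_bilin_nonneg_of_pos (A := -A) (C := -C) hw using 5 with p
    simp only [bilin]; ring
  · have hQB : 0 < Q + B := pos_of_mul_pos_right h hB.le
    exact convex_setOf_mul_bilin_nonneg_of_pos fun t ht => by
      nlinarith [mul_nonneg ht.1 hQB.le, mul_nonneg (sub_nonneg.2 ht.2) hB.le]

lemma convexHull_subset_setOf_mul_bilin_nonneg {Q A B C : ℝ} (h : 0 < B * (Q + B)) :
    convexHull ℝ {p ∈ unitSquare | bilin Q A B C p = 0} ⊆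
      {p | 0 ≤ Q * (A * B - Q * C) * bilin Q A B C p} := by
  refine (convexHull_min ?_ (convex_setOf_mul_bilin_nonneg h)).trans fun _ hp => hp.2
  exact fun p hp => ⟨hp.1.1, by rw [hp.2, mul_zero]⟩

lemma one_mul_bilin_add_mul_bilin (q a b c α β γ s : ℝ) (p : ℝ × ℝ) :
    1 * bilin q a b c p + s * bilin 0 α β γ p = bilin q (a + s * α) (b + s * β) (c + s * γ) p := by
  simp only [bilin]; ring

lemma mul_bilin_nonneg_of_mem_convexHull {q a b c α β γ s : ℝ}
    (hden : 0 < (b + s * β) * (q + (b + s * β))) {z : ℝ × ℝ}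
    (hz : z ∈ convexHull ℝ {p ∈ unitSquare | 1 * bilin q a b c p + s * bilin 0 α β γ p = 0})
    (hgz : bilin 0 α β γ z = 0) :
    0 ≤ q * ((a + s * α) * (b + s * β) - q * (c + s * γ)) * bilin q a b c z := by
  simp only [one_mul_bilin_add_mul_bilin] at hz
  have := convexHull_subset_setOf_mul_bilin_nonneg hden hz
  rwa [mem_ofPred_eq, ← one_mul_bilin_add_mul_bilin, hgz, mul_zero, add_zero, one_mul] at this

lemma exists_second_common_zero {q a b c α β γ : ℝ} (hq : q ≠ 0) (hα : α ≠ 0) (hβ : β ≠ 0)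
    {z₀ : ℝ × ℝ} (hf₀ : bilin q a b c z₀ = 0) (hg₀ : bilin 0 α β γ z₀ = 0) :
    ∃ P : ℝ × ℝ, bilin q a b c P = 0 ∧ bilin 0 α β γ P = 0 ∧
      ∀ p, bilin 0 α β γ p = 0 →
        β * bilin q a b c p = -(q * α) * (p.1 - z₀.1) * (p.1 - P.1) := by
  -- Vieta: `x` is the other root of `β f` restricted to the line `g = 0`
  obtain ⟨x, hx⟩ : ∃ x, q * α * (z₀.1 + x) = a * β - q * γ - b * α :=
    ⟨(a * β - q * γ - b * α) / (q * α) - z₀.1, by field_simp; ring⟩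
  have hfac (p : ℝ × ℝ) (hp : bilin 0 α β γ p = 0) :
      β * bilin q a b c p = -(q * α) * (p.1 - z₀.1) * (p.1 - x) := by
    simp only [bilin] at hf₀ hg₀ hp ⊢
    linear_combination (q * p.1 + b) * hp + (z₀.1 - p.1) * hx + β * hf₀ - (q * z₀.1 + b) * hg₀
  have hg : bilin 0 α β γ (x, -(α * x + γ) / β) = 0 := by
    simp only [bilin]; field_simp; ring
  refine ⟨(x, -(α * x + γ) / β), (mul_eq_zero.1 ?_).resolve_left hβ, hg, hfac⟩
  rw [hfac _ hg]; ring

lemma mem_segment_of_fst_mem_segment {α β γ : ℝ} (hβ : β ≠ 0) {p r z : ℝ × ℝ}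
    (hp : bilin 0 α β γ p = 0) (hr : bilin 0 α β γ r = 0) (hz : bilin 0 α β γ z = 0)
    (h : z.1 ∈ segment ℝ p.1 r.1) : z ∈ segment ℝ p r := by
  obtain ⟨u, v, hu, hv, huv, hx⟩ := h
  refine ⟨u, v, hu, hv, huv, Prod.ext (by simpa using hx) (mul_left_cancel₀ hβ ?_)⟩
  simp only [bilin, smul_eq_mul] at hp hr hz hx
  simp only [Prod.snd_add, Prod.smul_snd, smul_eq_mul]
  linear_combination u * hp + v * hr - hz - α * hx - γ * huv

lemma bilin_eq_mul_of_eq_zero {Q B C : ℝ} {p₁ p₂ : ℝ × ℝ} (hy : p₁.2 ≠ p₂.2)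
    (h₁ : bilin Q (-(Q * p₂.2)) B C p₁ = 0) (h₂ : bilin Q (-(Q * p₂.2)) B C p₂ = 0)
    (p : ℝ × ℝ) : bilin Q (-(Q * p₂.2)) B C p = Q * (p.1 - p₁.1) * (p.2 - p₂.2) := by
  simp only [bilin] at h₁ h₂ ⊢
  have hB : Q * p₁.1 + B = 0 :=
    (mul_eq_zero.1 (by linear_combination h₁ - h₂)).resolve_right (sub_ne_zero.2 hy)
  linear_combination (p.2 - p₂.2) * hB + h₂

def CutByThreeAggregations (f g : ℝ × ℝ → ℝ) : Prop :=
  ∃ T : Finset (ℝ × ℝ), T.card ≤ 3 ∧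
    convexHull ℝ (commonZeros f g) =
      ⋂ l ∈ T, convexHull ℝ {p ∈ unitSquare | l.1 * f p + l.2 * g p = 0}

namespace CutByThreeAggregations

variable {f g : ℝ × ℝ → ℝ}

lemma of_subset (T : Finset (ℝ × ℝ)) (hT : T.card ≤ 3)
    (h : ⋂ l ∈ T, convexHull ℝ {p ∈ unitSquare | l.1 * f p + l.2 * g p = 0} ⊆
      convexHull ℝ (commonZeros f g)) :
    CutByThreeAggregations f g := by
  refine ⟨T, hT, (subset_iInter₂ fun l _ => convexHull_mono ?_).antisymm h⟩
  rintro p ⟨hp, hf, hg⟩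
  exact ⟨hp, by rw [hf, hg]; ring⟩

lemma of_forall_eq_zero (l : ℝ × ℝ)
    (h : ∀ p ∈ unitSquare, l.1 * f p + l.2 * g p = 0 → f p = 0 ∧ g p = 0) :
    CutByThreeAggregations f g :=
  of_subset {l} (by simp) <| by
    rw [Finset.set_biInter_singleton]
    exact convexHull_mono fun p hp => ⟨hp.1, h p hp.1 hp.2⟩

lemma of_convex (hf : Convex ℝ {p ∈ unitSquare | f p = 0})
    (hg : Convex ℝ {p ∈ unitSquare | g p = 0}) : CutByThreeAggregations f g := by
  refine of_subset {(1, 0), (0, 1)} (Finset.card_le_two.trans (by norm_num)) fun z hz => ?_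
  simp only [mem_iInter, Finset.mem_insert, Finset.mem_singleton, forall_eq_or_imp, forall_eq,
    one_mul, zero_mul, add_zero, zero_add, hf.convexHull_eq, hg.convexHull_eq] at hz
  exact subset_convexHull ℝ _ ⟨hz.1.1, hz.1.2, hz.2.2⟩

lemma of_pencil {f' g' : ℝ × ℝ → ℝ} {u₁ u₂ v₁ v₂ : ℝ} (hdet : u₁ * v₂ - u₂ * v₁ ≠ 0)
    (hf' : ∀ p, f' p = u₁ * f p + u₂ * g p) (hg' : ∀ p, g' p = v₁ * f p + v₂ * g p)
    (h : CutByThreeAggregations f' g') : CutByThreeAggregations f g := by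
  classical
  obtain ⟨T, hT, hS⟩ := h
  refine ⟨T.image fun w => (w.1 * u₁ + w.2 * v₁, w.1 * u₂ + w.2 * v₂),
    Finset.card_image_le.trans hT, ?_⟩
  have hzeros : commonZeros f' g' = commonZeros f g := by
    ext p
    simp only [commonZeros, mem_ofPred_eq, hf', hg']
    refine and_congr_right fun _ => ⟨fun ⟨h₁, h₂⟩ => ⟨?_, ?_⟩, fun ⟨h₁, h₂⟩ => by simp [h₁, h₂]⟩
    · exact (mul_eq_zero.1 (by linear_combination v₂ * h₁ - u₂ * h₂)).resolve_left hdet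
    · exact (mul_eq_zero.1 (by linear_combination u₁ * h₂ - v₁ * h₁)).resolve_left hdet
  rw [Finset.set_biInter_finset_image, ← hzeros, hS]
  refine iInter₂_congr fun w _ => congrArg _ (ext fun p => and_congr_right fun _ => ?_)
  rw [hf', hg']
  constructor <;> intro h <;> linear_combination h

lemma symm (h : CutByThreeAggregations g f) : CutByThreeAggregations f g :=
  of_pencil (u₁ := 0) (u₂ := 1) (v₁ := 1) (v₂ := 0) (by norm_num) (fun p => by ring)
    (fun p => by ring) h

lemma of_comp_swap (h : CutByThreeAggregations (f ∘ Prod.swap) (g ∘ Prod.swap)) :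
    CutByThreeAggregations f g := by
  obtain ⟨T, hT, hS⟩ := h
  have hconv (P : ℝ × ℝ → Prop) : convexHull ℝ {p ∈ unitSquare | P p} =
      Prod.swap '' convexHull ℝ {p ∈ unitSquare | P p.swap} := by
    rw [← image_swap_sep P]
    exact (LinearMap.image_convexHull (LinearEquiv.prodComm ℝ ℝ ℝ).toLinearMap _).symm
  refine ⟨T, hT, ?_⟩
  calc convexHull ℝ (commonZeros f g)
      = Prod.swap '' convexHull ℝ (commonZeros (f ∘ Prod.swap) (g ∘ Prod.swap)) := hconv _
    _ = Prod.swap '' ⋂ l ∈ T, convexHull ℝ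
          {p ∈ unitSquare | l.1 * (f ∘ Prod.swap) p + l.2 * (g ∘ Prod.swap) p = 0} := by rw [hS]
    _ = _ := by
      rw [image_iInter₂ Prod.swap_bijective]
      exact iInter₂_congr fun l _ => (hconv fun p => l.1 * f p + l.2 * g p = 0).symm

lemma of_swap {q a b c q' a' b' c' : ℝ}
    (h : CutByThreeAggregations (bilin q b a c) (bilin q' b' a' c')) :
    CutByThreeAggregations (bilin q a b c) (bilin q' a' b' c') :=
  of_comp_swap (by rwa [bilin_comp_swap, bilin_comp_swap])

lemma of_subset_line {α β γ : ℝ} (T : Finset (ℝ × ℝ)) (hT : T.card ≤ 2)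
    (h : ∀ z ∈ unitSquare, bilin 0 α β γ z = 0 →
      (∀ l ∈ T, z ∈ convexHull ℝ
        {p ∈ unitSquare | l.1 * f p + l.2 * bilin 0 α β γ p = 0}) →
      z ∈ convexHull ℝ (commonZeros f (bilin 0 α β γ))) :
    CutByThreeAggregations f (bilin 0 α β γ) := by
  classical
  refine of_subset (insert (0, 1) T) ((Finset.card_insert_le _ _).trans (by omega)) fun z hz => ?_
  rw [Finset.set_biInter_insert] at hz
  have hL : z ∈ {p ∈ unitSquare | bilin 0 α β γ p = 0} := by
    rw [← (convex_setOf_bilin_zero_eq_zero α β γ).convexHull_eq]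
    simpa only [zero_mul, one_mul, zero_add] using hz.1
  exact h z hL.1 hL.2 fun l hl => mem_iInter₂.1 hz.2 l hl

lemma of_horizontal {q a b c β γ : ℝ} (hq : q ≠ 0) (hβ : β ≠ 0) {z₀ : ℝ × ℝ}
    (hz₀ : z₀ ∈ commonZeros (bilin q a b c) (bilin 0 0 β γ)) :
    CutByThreeAggregations (bilin q a b c) (bilin 0 0 β γ) := by
  obtain ⟨-, hf₀, hg₀⟩ := hz₀
  have hline (p : ℝ × ℝ) : β * bilin q a b c p =
      (a * β - q * γ) * p.1 + (c * β - b * γ) + (q * p.1 + b) * bilin 0 0 β γ p := by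
    simp only [bilin]; ring
  by_cases hK : a * β - q * γ = 0
  · refine of_forall_eq_zero (0, 1) fun p _ hp => ?_
    have hg : bilin 0 0 β γ p = 0 := by simpa using hp
    have hc : c * β - b * γ = 0 := by
      have := hline z₀
      rw [hf₀, hg₀, hK] at this
      linarith
    exact ⟨(mul_eq_zero.1 (by rw [hline, hK, hc, hg]; ring)).resolve_left hβ, hg⟩
  have hK' : q * (a * β - q * γ) ≠ 0 := mul_ne_zero hq hK
  -- the discriminant of `f + s g` is `q (a b - q c) + s q (a β - q γ)`, so those of `f + s g` and
  -- `f - s g` have opposite signs once `|s|` is large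
  obtain ⟨M₁, hM₁⟩ := exists_forall_le_abs_quadratic_pos (sq_pos_of_ne_zero hβ)
    ((2 * b + q) * β) (b * (q + b))
  obtain ⟨M₂, hM₂⟩ := exists_forall_le_abs_quadratic_pos (sq_pos_of_ne_zero hK') 0
    (-(q * (a * b - q * c)) ^ 2)
  set s := max M₁ M₂
  have hden (t : ℝ) (ht : |t| = |s|) : 0 < (b + t * β) * (q + (b + t * β)) := by
    have := hM₁ t (ht ▸ (le_max_left _ _).trans (le_abs_self _))
    linarith
  refine of_subset_line {(1, s), (1, -s)} Finset.card_le_two fun z hz hgz hmem => ?_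
  have h₁ := mul_bilin_nonneg_of_mem_convexHull (hden s rfl) (hmem (1, s) (by simp)) hgz
  have h₂ := mul_bilin_nonneg_of_mem_convexHull (hden (-s) (abs_neg s)) (hmem (1, -s) (by simp)) hgz
  have hfz := eq_zero_of_mul_nonneg_of_mul_nonneg h₁ h₂ (by
    have := hM₂ s ((le_max_right _ _).trans (le_abs_self _))
    linarith)
  exact subset_convexHull ℝ _ ⟨hz, hfz, hgz⟩

lemma of_vertical {q a b c α γ : ℝ} (hq : q ≠ 0) (hα : α ≠ 0) {z₀ : ℝ × ℝ}
    (hz₀ : z₀ ∈ commonZeros (bilin q a b c) (bilin 0 α 0 γ)) :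
    CutByThreeAggregations (bilin q a b c) (bilin 0 α 0 γ) :=
  of_swap (of_horizontal hq hα (swap_mem_commonZeros_bilin hz₀))

lemma of_two_common_zeros {q a b c α β γ : ℝ} (hq : q ≠ 0) (hα : α ≠ 0) (hβ : β ≠ 0)
    {z₀ P : ℝ × ℝ}
    (hz₀ : z₀ ∈ commonZeros (bilin q a b c) (bilin 0 α β γ))
    (hP : P ∈ commonZeros (bilin q a b c) (bilin 0 α β γ))
    (hfac : ∀ p, bilin 0 α β γ p = 0 →
      β * bilin q a b c p = -(q * α) * (p.1 - z₀.1) * (p.1 - P.1)) :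
    CutByThreeAggregations (bilin q a b c) (bilin 0 α β γ) := by
  have hk : q * α * β ≠ 0 := mul_ne_zero (mul_ne_zero hq hα) hβ
  obtain ⟨M₁, hM₁⟩ := exists_forall_le_abs_quadratic_pos (sq_pos_of_ne_zero hβ)
    ((2 * b + q) * β) (b * (q + b))
  -- `D * (q α β)` below is a quadratic in `s` with leading coefficient `(q α β)²`
  obtain ⟨M₂, hM₂⟩ := exists_forall_le_abs_quadratic_pos (sq_pos_of_ne_zero hk)
    (q * α * β * (q * (a * β + b * α - q * γ))) (q * α * β * (q * (a * b - q * c)))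
  set s := max M₁ M₂
  set D := q * ((a + s * α) * (b + s * β) - q * (c + s * γ))
  have hden : 0 < (b + s * β) * (q + (b + s * β)) := by
    have := hM₁ s ((le_max_left _ _).trans (le_abs_self _))
    linarith
  have hD : 0 < D * (q * α * β) := by
    have := hM₂ s ((le_max_right _ _).trans (le_abs_self _))
    linarith
  refine of_subset_line {(1, s)} (by simp) fun z hz hgz hmem => ?_
  have h₁ := mul_bilin_nonneg_of_mem_convexHull hden (hmem (1, s) (by simp)) hgz
  have hneg : (z.1 - z₀.1) * (z.1 - P.1) ≤ 0 := by
    have h₂ : 0 ≤ (D * (q * α * β)) * (D * bilin q a b c z) := mul_nonneg hD.le h₁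
    have h₃ : (D * (q * α * β)) * (D * bilin q a b c z) =
        -(D * (q * α)) ^ 2 * ((z.1 - z₀.1) * (z.1 - P.1)) := by
      linear_combination D ^ 2 * (q * α) * hfac z hgz
    have hDqα : D * (q * α) ≠ 0 := mul_ne_zero (left_ne_zero_of_mul hD.ne') (mul_ne_zero hq hα)
    nlinarith [sq_pos_of_ne_zero hDqα]
  refine segment_subset_convexHull hz₀ hP (mem_segment_of_fst_mem_segment hβ hz₀.2.2 hP.2.2 hgz ?_)
  rw [segment_eq_uIcc, mem_uIcc]
  rcases mul_nonpos_iff.1 hneg with h | h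
  · left; constructor <;> linarith
  · right; constructor <;> linarith

lemma of_common_zero_snd_not_mem {q a b c α β γ : ℝ} (hq : q ≠ 0) (hα : α ≠ 0) (hβ : β ≠ 0)
    {z₀ P : ℝ × ℝ}
    (hz₀ : z₀ ∈ commonZeros (bilin q a b c) (bilin 0 α β γ))
    (hfP : bilin q a b c P = 0) (hgP : bilin 0 α β γ P = 0) (hP : P.2 ∉ Icc (0:ℝ) 1) :
    CutByThreeAggregations (bilin q a b c) (bilin 0 α β γ) := by
  obtain ⟨hz₀box, hf₀, hg₀⟩ := hz₀
  set s := -(a + q * P.2) / α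
  have hs : a + s * α = -(q * P.2) := by rw [div_mul_cancel₀ _ hα]; ring
  -- the aggregation with `x`-coefficient `-q P.2` vanishes at `z₀` and at `P`, hence factors
  have hmember (p : ℝ × ℝ) :
      1 * bilin q a b c p + s * bilin 0 α β γ p = q * (p.1 - z₀.1) * (p.2 - P.2) := by
    rw [one_mul_bilin_add_mul_bilin, hs]
    refine bilin_eq_mul_of_eq_zero (fun h => hP (h ▸ hz₀box.2)) ?_ ?_ p
    · rw [← hs, ← one_mul_bilin_add_mul_bilin, hf₀, hg₀]; ring
    · rw [← hs, ← one_mul_bilin_add_mul_bilin, hfP, hgP]; ring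
  refine of_subset_line {(1, s)} (by simp) fun z hz hgz hmem => ?_
  have hsub : {p ∈ unitSquare | 1 * bilin q a b c p + s * bilin 0 α β γ p = 0} ⊆
      {p ∈ unitSquare | bilin 0 1 0 (-z₀.1) p = 0} := by
    rintro p ⟨hp, h⟩
    rw [hmember, mul_eq_zero, mul_eq_zero, sub_eq_zero, sub_eq_zero] at h
    refine ⟨hp, ?_⟩
    rcases h with (h | h) | h
    · exact absurd h hq
    · simp only [bilin]; linarith
    · exact absurd (h ▸ hp.2) hP
  have hx : z.1 = z₀.1 := by
    have := (convexHull_min hsub (convex_setOf_bilin_zero_eq_zero 1 0 (-z₀.1))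
      (hmem (1, s) (by simp))).2
    simp only [bilin] at this
    linarith
  have hz₀eq : z = z₀ := by
    refine Prod.ext hx (mul_left_cancel₀ hβ ?_)
    simp only [bilin] at hgz hg₀
    linear_combination hgz - hg₀ - α * hx
  exact subset_convexHull ℝ _ (hz₀eq ▸ ⟨hz₀box, hf₀, hg₀⟩)

lemma of_diagonal {q a b c α β γ : ℝ} (hq : q ≠ 0) (hα : α ≠ 0) (hβ : β ≠ 0) {z₀ : ℝ × ℝ}
    (hz₀ : z₀ ∈ commonZeros (bilin q a b c) (bilin 0 α β γ)) :
    CutByThreeAggregations (bilin q a b c) (bilin 0 α β γ) := by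
  obtain ⟨P, hfP, hgP, hfac⟩ := exists_second_common_zero hq hα hβ hz₀.2.1 hz₀.2.2
  by_cases hP : P ∈ unitSquare
  · exact of_two_common_zeros hq hα hβ hz₀ ⟨hP, hfP, hgP⟩ hfac
  by_cases hP₂ : P.2 ∈ Icc (0:ℝ) 1
  · refine of_swap (of_common_zero_snd_not_mem (P := P.swap) hq hβ hα
      (swap_mem_commonZeros_bilin hz₀) ?_ ?_ fun h => hP ⟨h, hP₂⟩)
    · rw [bilin_swap]; exact hfP
    · rw [bilin_swap]; exact hgP
  · exact of_common_zero_snd_not_mem hq hα hβ hz₀ hfP hgP hP₂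

lemma of_affine {q a b c α β γ : ℝ} (hq : q ≠ 0)
    (hne : (commonZeros (bilin q a b c) (bilin 0 α β γ)).Nonempty) :
    CutByThreeAggregations (bilin q a b c) (bilin 0 α β γ) := by
  obtain ⟨z₀, hz₀⟩ := hne
  rcases eq_or_ne α 0 with rfl | hα <;> rcases eq_or_ne β 0 with rfl | hβ
  · have hγ : γ = 0 := by simpa [bilin] using hz₀.2.2
    refine of_forall_eq_zero (1, 0) fun p _ hp => ⟨by simpa using hp, ?_⟩
    simp [bilin, hγ]
  · exact of_horizontal hq hβ hz₀
  · exact of_vertical hq hα hz₀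
  · exact of_diagonal hq hα hβ hz₀

lemma of_bilin {q a b c q' a' b' c' : ℝ} (hq : q ≠ 0)
    (hne : (commonZeros (bilin q a b c) (bilin q' a' b' c')).Nonempty) :
    CutByThreeAggregations (bilin q a b c) (bilin q' a' b' c') := by
  have hg (p : ℝ × ℝ) : bilin 0 (q * a' - q' * a) (q * b' - q' * b) (q * c' - q' * c) p =
      -q' * bilin q a b c p + q * bilin q' a' b' c' p := by
    simp only [bilin]; ring
  obtain ⟨z, hz, hf, hf'⟩ := hne
  refine of_pencil (u₁ := 1) (u₂ := 0) (by simpa using hq) (fun p => by ring) hg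
    (of_affine hq ⟨z, hz, hf, by rw [hg, hf, hf']; ring⟩)

end CutByThreeAggregations

theorem stmt0_general (q1 q2 a1 a2 b1 b2 c1 c2 : ℝ)
    (hne : (setS q1 q2 a1 a2 b1 b2 c1 c2).Nonempty) :
    ∃ T : Finset (ℝ × ℝ), T.card ≤ 3 ∧
      convexHull ℝ (setS q1 q2 a1 a2 b1 b2 c1 c2) =
        ⋂ l ∈ T, convexHull ℝ (setAgg q1 q2 a1 a2 b1 b2 c1 c2 l) := by
  show CutByThreeAggregations (bilin q1 a1 b1 c1) (bilin q2 a2 b2 c2)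
  by_cases hq1 : q1 = 0
  · by_cases hq2 : q2 = 0
    · subst hq1 hq2
      exact .of_convex (convex_setOf_bilin_zero_eq_zero a1 b1 c1)
        (convex_setOf_bilin_zero_eq_zero a2 b2 c2)
    · obtain ⟨z, hz, h₁, h₂⟩ := hne
      exact (CutByThreeAggregations.of_bilin hq2 ⟨z, hz, h₂, h₁⟩).symm
  · exact .of_bilin hq1 hne

theorem stmt0 (q1 q2 a1 a2 b1 b2 c1 c2 : ℝ)
    (hne : (setS q1 q2 a1 a2 b1 b2 c1 c2).Nonempty)
    (hind : ¬ ∃ μ : ℝ, (q1, a1, b1, c1) = (μ * q2, μ * a2, μ * b2, μ * c2)) :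
    ∃ T : Finset (ℝ × ℝ), T.card ≤ 3 ∧
      convexHull ℝ (setS q1 q2 a1 a2 b1 b2 c1 c2) =
        ⋂ l ∈ T, convexHull ℝ (setAgg q1 q2 a1 a2 b1 b2 c1 c2 l) :=
  stmt0_general q1 q2 a1 a2 b1 b2 c1 c2 hne
end

section
/- The convex hull of the set {(x, y1, y2) ∈ [0,1]³ : x·y1 = 1/2} equals {(x, y1, y2) ∈ [0,1]³ : x·y1 ≥ 1/2 and x + y1 ≤ 3/2}. -/
/-!
The third coordinate is a free factor: the set is the image of `A ×ˢ [0,1]` under reassociation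
of the product, where `A` is the arc `xy = 1/2` in `[0,1]²`, and convex hulls commute with
products and with linear maps. The arc runs from `(1/2, 1)` to `(1, 1/2)`, and its convex hull is
the region between the arc and this chord `x + y = 3/2`. That region is convex because `c ≤ xy`
survives convex combinations of points of the nonnegative quadrant (AM-GM bounds the cross terms
`x₁y₂ + x₂y₁` below by `2c`); conversely each of its points lies on a vertical segment from the
arc to the chord, and the chord lies in the hull.
-/

open Set

def unitCube : Set (ℝ × ℝ × ℝ) :=
  {p | p.1 ∈ Icc (0:ℝ) 1 ∧ p.2.1 ∈ Icc (0:ℝ) 1 ∧ p.2.2 ∈ Icc (0:ℝ) 1}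

theorem convex_setOf_le_mul (c : ℝ) :
    Convex ℝ {q : ℝ × ℝ | 0 ≤ q.1 ∧ 0 ≤ q.2 ∧ c ≤ q.1 * q.2} := by
  rintro ⟨x₁, y₁⟩ ⟨hx₁, hy₁, h₁⟩ ⟨x₂, y₂⟩ ⟨hx₂, hy₂, h₂⟩ a b ha hb hab
  dsimp only at hx₁ hy₁ h₁ hx₂ hy₂ h₂
  simp only [mem_ofPred_eq, Prod.smul_mk, Prod.mk_add_mk, smul_eq_mul]
  refine ⟨by positivity, by positivity, ?_⟩
  rcases le_or_gt c 0 with hc | hc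
  · exact hc.trans (by positivity)
  have cross : 2 * c ≤ x₁ * y₂ + x₂ * y₁ := by
    have : (2 * c) ^ 2 ≤ (x₁ * y₂ + x₂ * y₁) ^ 2 := by
      nlinarith [sq_nonneg (x₁ * y₂ - x₂ * y₁), mul_le_mul h₁ h₂ hc.le (hc.le.trans h₁)]
    exact (abs_le_of_sq_le_sq' this (by positivity)).2
  calc c = (a + b) ^ 2 * c := by rw [hab, one_pow, one_mul]
    _ ≤ a ^ 2 * (x₁ * y₁) + b ^ 2 * (x₂ * y₂) + a * b * (x₁ * y₂ + x₂ * y₁) := by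
      nlinarith [mul_le_mul_of_nonneg_left h₁ (sq_nonneg a),
        mul_le_mul_of_nonneg_left h₂ (sq_nonneg b),
        mul_le_mul_of_nonneg_left cross (mul_nonneg ha hb)]
    _ = (a * x₁ + b * x₂) * (a * y₁ + b * y₂) := by ring

def hyperbolaArc : Set (ℝ × ℝ) := {q ∈ Icc 0 1 ×ˢ Icc 0 1 | q.1 * q.2 = 1 / 2}

def hyperbolaHull : Set (ℝ × ℝ) :=
  {q ∈ Icc 0 1 ×ˢ Icc 0 1 | 1 / 2 ≤ q.1 * q.2 ∧ q.1 + q.2 ≤ 3 / 2}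

theorem convex_hyperbolaHull : Convex ℝ hyperbolaHull := by
  have : hyperbolaHull = Icc 0 1 ×ˢ Icc 0 1 ∩ {q | 0 ≤ q.1 ∧ 0 ≤ q.2 ∧ 1 / 2 ≤ q.1 * q.2} ∩
      {q | (LinearMap.fst ℝ ℝ ℝ + LinearMap.snd ℝ ℝ ℝ) q ≤ 3 / 2} := by
    ext q
    simp only [hyperbolaHull, mem_inter_iff, mem_prod, mem_Icc, mem_ofPred_eq,
      LinearMap.add_apply, LinearMap.fst_apply, LinearMap.snd_apply]
    tauto
  rw [this]
  exact (((convex_Icc 0 1).prod (convex_Icc 0 1)).inter (convex_setOf_le_mul _)).inter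
    (convex_halfSpace_le (LinearMap.isLinear _) _)

theorem hyperbolaArc_subset_hyperbolaHull : hyperbolaArc ⊆ hyperbolaHull := by
  rintro ⟨x, y⟩ ⟨⟨⟨hx₀, hx₁⟩, hy₀, hy₁⟩, h⟩
  dsimp only at hx₀ hy₀ hx₁ hy₁ h
  refine ⟨⟨⟨hx₀, hx₁⟩, hy₀, hy₁⟩, h.ge, ?_⟩
  nlinarith [mul_nonneg (sub_nonneg.2 hx₁) (sub_nonneg.2 hy₁)]

theorem mk_one_div_mem_hyperbolaArc {x : ℝ} (hx₀ : 1 / 2 ≤ x) (hx₁ : x ≤ 1) :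
    (x, 1 / (2 * x)) ∈ hyperbolaArc := by
  have hx : 0 < x := by linarith
  refine ⟨⟨⟨hx.le, hx₁⟩, by positivity, ?_⟩, by field_simp⟩
  rw [div_le_one (by positivity)]
  linarith

theorem mk_sub_mem_convexHull_hyperbolaArc {x : ℝ} (hx₀ : 1 / 2 ≤ x) (hx₁ : x ≤ 1) :
    (x, 3 / 2 - x) ∈ convexHull ℝ hyperbolaArc := by
  have hC : ((1 / 2 : ℝ), (1 : ℝ)) ∈ hyperbolaArc := by norm_num [hyperbolaArc]
  have hD : ((1 : ℝ), (1 / 2 : ℝ)) ∈ hyperbolaArc := by norm_num [hyperbolaArc]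
  refine (convex_convexHull ℝ _).segment_subset (subset_convexHull ℝ _ hC)
    (subset_convexHull ℝ _ hD) ⟨2 - 2 * x, 2 * x - 1, by linarith, by linarith, by ring, ?_⟩
  simp only [Prod.smul_mk, Prod.mk_add_mk, smul_eq_mul, Prod.mk.injEq]
  constructor <;> ring

theorem hyperbolaHull_subset_convexHull : hyperbolaHull ⊆ convexHull ℝ hyperbolaArc := by
  rintro ⟨x, y⟩ ⟨⟨⟨hx₀, hx₁⟩, hy₀, hy₁⟩, hxy, hsum⟩
  dsimp only at hx₀ hy₀ hx₁ hy₁ hxy hsum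
  have hx : 1 / 2 ≤ x := by nlinarith
  have hlow : 1 / (2 * x) ≤ y := by
    rw [div_le_iff₀ (by positivity)]
    linarith
  have hseg : (x, y) ∈ segment ℝ (x, 1 / (2 * x)) (x, 3 / 2 - x) := by
    rw [← Prod.image_mk_segment_right, segment_eq_Icc (by linarith)]
    exact ⟨y, ⟨hlow, by linarith⟩, rfl⟩
  exact (convex_convexHull ℝ _).segment_subset
    (subset_convexHull ℝ _ (mk_one_div_mem_hyperbolaArc hx hx₁))
    (mk_sub_mem_convexHull_hyperbolaArc hx hx₁) hseg

theorem convexHull_hyperbolaArc : convexHull ℝ hyperbolaArc = hyperbolaHull :=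
  (convexHull_min hyperbolaArc_subset_hyperbolaHull convex_hyperbolaHull).antisymm
    hyperbolaHull_subset_convexHull

theorem convexHull_image_prodAssoc_prod {𝕜 E F G : Type*} [Field 𝕜] [LinearOrder 𝕜]
    [IsStrictOrderedRing 𝕜] [AddCommGroup E] [AddCommGroup F] [AddCommGroup G]
    [Module 𝕜 E] [Module 𝕜 F] [Module 𝕜 G] (s : Set (E × F)) (t : Set G) :
    convexHull 𝕜 (LinearEquiv.prodAssoc 𝕜 E F G '' s ×ˢ t) =
      LinearEquiv.prodAssoc 𝕜 E F G '' convexHull 𝕜 s ×ˢ convexHull 𝕜 t := by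
  rw [← convexHull_prod]
  exact ((LinearEquiv.prodAssoc 𝕜 E F G).toLinearMap.image_convexHull _).symm

theorem sep_unitCube_eq_image_prodAssoc (P : ℝ → ℝ → Prop) :
    {p ∈ unitCube | P p.1 p.2.1} =
      LinearEquiv.prodAssoc ℝ ℝ ℝ ℝ '' {q ∈ Icc 0 1 ×ˢ Icc 0 1 | P q.1 q.2} ×ˢ Icc 0 1 := by
  ext p
  refine ⟨fun ⟨⟨hx, hy, hz⟩, hP⟩ => ⟨((p.1, p.2.1), p.2.2), ⟨⟨⟨hx, hy⟩, hP⟩, hz⟩, rfl⟩, ?_⟩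
  rintro ⟨q, ⟨⟨⟨hx, hy⟩, hP⟩, hz⟩, rfl⟩
  exact ⟨⟨hx, hy, hz⟩, hP⟩

theorem stmt10 :
    convexHull ℝ {p ∈ unitCube | p.1 * p.2.1 = 1/2} =
      {p ∈ unitCube | p.1 * p.2.1 ≥ 1/2 ∧ p.1 + p.2.1 ≤ 3/2} := by
  rw [sep_unitCube_eq_image_prodAssoc fun x y => x * y = 1 / 2,
    sep_unitCube_eq_image_prodAssoc fun x y => x * y ≥ 1 / 2 ∧ x + y ≤ 3 / 2,
    convexHull_image_prodAssoc_prod, (convex_Icc _ _).convexHull_eq]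
  exact congrArg (LinearEquiv.prodAssoc ℝ ℝ ℝ ℝ '' · ×ˢ Icc 0 1) convexHull_hyperbolaArc
end

section
/- Let r, τ, m, b ∈ ℝ with τ ≠ 0, and define S₁ = {(x, y) ∈ [0,1]² : (x − r)·y = τ}, S₂ = {(x, y) ∈ [0,1]² : m·x − y + b = 0}, and S = S₁ ∩ S₂. If S contains exactly two points, then conv(S) = conv(S₁) ∩ S₂, i.e., the convex hull of S is the line segment joining the two points of S and equals the intersection of the convex hull of S₁ with the line segment S₂. -/
/-!
Every point of `S₁` satisfies `y ≥ 0` and `τ · ((x - r) y - τ) ≥ 0`, i.e. lies on the far side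
of the branch of the hyperbola `(x - r) y = τ` through it; this region is convex, so it also
contains `conv(S₁)`. Along the line `y = m x + b` the quadratic `(x - r)(m x + b) - τ` vanishes
at the abscissae of the two points `p, q` of `S`, hence equals `m (x - p₁)(x - q₁)`, and
`m ≠ 0` because its value at `x = r` is `-τ ≠ 0`. The midpoint of `p, q` lies in the region,
which forces `τ m < 0`; so a point of the line lies in the region only if its abscissa is
between `p₁` and `q₁`, i.e. if it lies on the segment `[p, q]`.
-/

open Set

/-- `S₁ = {(x,y) ∈ [0,1]² : (x − r)·y = τ}`. -/
def setS1 (r τ : ℝ) : Set (ℝ × ℝ) := {p ∈ unitSquare | (p.1 - r) * p.2 = τ}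

/-- `S₂ = {(x,y) ∈ [0,1]² : m·x − y + b = 0}`. -/
def setS2 (m b : ℝ) : Set (ℝ × ℝ) := {p ∈ unitSquare | m * p.1 - p.2 + b = 0}

/-- For `τ > 0` this is `(x - r) y ≥ τ`, for `τ < 0` it is `(x - r) y ≤ τ` (with `y ≥ 0`). -/
def hyperbolaRegion (r τ : ℝ) : Set (ℝ × ℝ) := {z | 0 ≤ z.2 ∧ 0 ≤ τ * ((z.1 - r) * z.2 - τ)}

theorem sq_le_and_nonneg_of_mem_hyperbolaRegion {r τ : ℝ} (hτ : τ ≠ 0) {z : ℝ × ℝ}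
    (hz : z ∈ hyperbolaRegion r τ) : τ ^ 2 ≤ τ * (z.1 - r) * z.2 ∧ 0 ≤ τ * (z.1 - r) := by
  have hle : τ ^ 2 ≤ τ * (z.1 - r) * z.2 := by linear_combination hz.2
  exact ⟨hle, (pos_of_mul_pos_left ((sq_pos_of_ne_zero hτ).trans_le hle) hz.1).le⟩

theorem convex_hyperbolaRegion (r τ : ℝ) : Convex ℝ (hyperbolaRegion r τ) := by
  intro z hz w hw a c ha hc hac
  refine ⟨add_nonneg (mul_nonneg ha hz.1) (mul_nonneg hc hw.1), ?_⟩
  rcases eq_or_ne τ 0 with rfl | hτ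
  · simp
  obtain ⟨hPz, hτz⟩ := sq_le_and_nonneg_of_mem_hyperbolaRegion hτ hz
  obtain ⟨hPw, hτw⟩ := sq_le_and_nonneg_of_mem_hyperbolaRegion hτ hw
  have hcross : 2 * τ ^ 2 ≤ τ * (z.1 - r) * w.2 + τ * (w.1 - r) * z.2 :=
    two_mul_le_add_of_sq_le_mul (mul_nonneg hτz hw.1) (mul_nonneg hτw hz.1) (by
      calc (τ ^ 2) ^ 2 = τ ^ 2 * τ ^ 2 := sq _
        _ ≤ (τ * (z.1 - r) * z.2) * (τ * (w.1 - r) * w.2) :=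
            mul_le_mul hPz hPw (sq_nonneg τ) ((sq_nonneg τ).trans hPz)
        _ = _ := by ring)
  simp only [Prod.fst_add, Prod.snd_add, Prod.smul_fst, Prod.smul_snd, smul_eq_mul]
  have hsplit : τ * ((a * z.1 + c * w.1 - r) * (a * z.2 + c * w.2) - τ)
      = a ^ 2 * (τ * (z.1 - r) * z.2 - τ ^ 2) + c ^ 2 * (τ * (w.1 - r) * w.2 - τ ^ 2)
        + a * c * (τ * (z.1 - r) * w.2 + τ * (w.1 - r) * z.2 - 2 * τ ^ 2) := by
    obtain rfl : c = 1 - a := by linarith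
    ring
  rw [hsplit]
  exact add_nonneg
    (add_nonneg (mul_nonneg (sq_nonneg a) (sub_nonneg.2 hPz))
      (mul_nonneg (sq_nonneg c) (sub_nonneg.2 hPw)))
    (mul_nonneg (mul_nonneg ha hc) (sub_nonneg.2 hcross))

theorem setS1_subset_hyperbolaRegion (r τ : ℝ) : setS1 r τ ⊆ hyperbolaRegion r τ :=
  fun z hz => ⟨hz.1.2.1, by rw [hz.2, sub_self, mul_zero]⟩

theorem convex_setS2 (m b : ℝ) : Convex ℝ (setS2 m b) := by
  refine ((convex_Icc (𝕜 := ℝ) (0 : ℝ) 1).prod (convex_Icc (𝕜 := ℝ) (0 : ℝ) 1)).inter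
    (t := {z | m * z.1 - z.2 + b = 0}) ?_
  intro z hz w hw a c _ _ hac
  simp only [mem_ofPred_eq, Prod.fst_add, Prod.snd_add, Prod.smul_fst, Prod.smul_snd,
    smul_eq_mul] at hz hw ⊢
  linear_combination a * hz + c * hw - b * hac

theorem sub_mul_sub_eq_mul_sub_mul_sub {K : Type*} [Field K] {r τ m b u v : K} (huv : u ≠ v)
    (hu : (u - r) * (m * u + b) = τ) (hv : (v - r) * (m * v + b) = τ) (x : K) :
    (x - r) * (m * x + b) - τ = m * (x - u) * (x - v) := by
  have hsum : m * (u + v) + b - m * r = 0 := by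
    refine (mul_eq_zero.1 ?_).resolve_left (sub_ne_zero.2 huv)
    linear_combination hu - hv
  linear_combination (x - u) * hsum + hu

theorem mem_segment_of_mem_graph {m b : ℝ} {p q z : ℝ × ℝ} (hp : p.2 = m * p.1 + b)
    (hq : q.2 = m * q.1 + b) (hz : z.2 = m * z.1 + b) (hz₁ : z.1 ∈ segment ℝ p.1 q.1) :
    z ∈ segment ℝ p q := by
  obtain ⟨a, c, ha, hc, hac, h⟩ := hz₁
  refine ⟨a, c, ha, hc, hac, Prod.ext h ?_⟩
  simp only [Prod.snd_add, Prod.smul_snd, smul_eq_mul] at h ⊢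
  rw [hp, hq, hz, ← h]
  linear_combination b * hac

theorem convexHull_setS1_inter_setS2_subset_segment {r τ m b : ℝ} (hτ : τ ≠ 0) {p q : ℝ × ℝ}
    (hpq : p ≠ q) (hp : p ∈ setS1 r τ ∩ setS2 m b) (hq : q ∈ setS1 r τ ∩ setS2 m b) :
    convexHull ℝ (setS1 r τ) ∩ setS2 m b ⊆ segment ℝ p q := by
  have hline : ∀ z ∈ setS2 m b, z.2 = m * z.1 + b := fun z hz => by linear_combination -hz.2
  have hp₁q₁ : p.1 ≠ q.1 := fun h => hpq (Prod.ext h (by rw [hline p hp.2, hline q hq.2, h]))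
  have hfactor := sub_mul_sub_eq_mul_sub_mul_sub hp₁q₁
    (hline p hp.2 ▸ hp.1.2) (hline q hq.2 ▸ hq.1.2)
  have hm : m ≠ 0 := by
    rintro rfl
    exact hτ (by linear_combination -hfactor r)
  have hregion : ∀ z ∈ convexHull ℝ (setS1 r τ) ∩ setS2 m b,
      0 ≤ τ * m * ((z.1 - p.1) * (z.1 - q.1)) := by
    intro z hz
    have hzK := (convexHull_min (setS1_subset_hyperbolaRegion r τ)
      (convex_hyperbolaRegion r τ) hz.1).2
    rw [hline z hz.2, hfactor] at hzK
    linarith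
  have hmid : (1 / 2 : ℝ) • p + (1 / 2 : ℝ) • q ∈ convexHull ℝ (setS1 r τ) ∩ setS2 m b :=
    (convex_convexHull ℝ _).inter (convex_setS2 m b)
      ⟨subset_convexHull ℝ _ hp.1, hp.2⟩ ⟨subset_convexHull ℝ _ hq.1, hq.2⟩
      (by norm_num) (by norm_num) (by norm_num)
  have hτm : τ * m < 0 := by
    have hmid' := hregion _ hmid
    simp only [Prod.fst_add, Prod.smul_fst, smul_eq_mul] at hmid'
    have hsq : 0 < (p.1 - q.1) ^ 2 := sq_pos_of_ne_zero (sub_ne_zero.2 hp₁q₁)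
    have hnonpos : τ * m * (p.1 - q.1) ^ 2 ≤ 0 := by linarith
    exact lt_of_le_of_ne (nonpos_of_mul_nonpos_left hnonpos hsq) (mul_ne_zero hτ hm)
  intro z hz
  refine mem_segment_of_mem_graph (hline p hp.2) (hline q hq.2) (hline z hz.2) ?_
  have hbetween := nonpos_of_mul_nonneg_right (hregion z hz) hτm
  rw [segment_eq_uIcc, mem_uIcc]
  rcases mul_nonpos_iff.1 hbetween with h | h
  · left; constructor <;> linarith [h.1, h.2]
  · right; constructor <;> linarith [h.1, h.2]

theorem stmt16 (r τ m b : ℝ) (hτ : τ ≠ 0) (p q : ℝ × ℝ) (hpq : p ≠ q)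
    (hS : setS1 r τ ∩ setS2 m b = {p, q}) :
    convexHull ℝ (setS1 r τ ∩ setS2 m b) = segment ℝ p q ∧
    convexHull ℝ (setS1 r τ ∩ setS2 m b) = convexHull ℝ (setS1 r τ) ∩ setS2 m b := by
  have hp : p ∈ setS1 r τ ∩ setS2 m b := hS ▸ mem_insert p {q}
  have hq : q ∈ setS1 r τ ∩ setS2 m b := hS ▸ mem_insert_of_mem p rfl
  have hhull : convexHull ℝ (setS1 r τ ∩ setS2 m b) = segment ℝ p q := by
    rw [hS, convexHull_pair]
  refine ⟨hhull, hhull ▸ (Subset.antisymm ?_ ?_)⟩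
  · exact ((convex_convexHull ℝ _).inter (convex_setS2 m b)).segment_subset
      ⟨subset_convexHull ℝ _ hp.1, hp.2⟩ ⟨subset_convexHull ℝ _ hq.1, hq.2⟩
  · exact convexHull_setS1_inter_setS2_subset_segment hτ hpq hp hq
end
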